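/- Let Σ : ℝⁿ × ℝⁿ → ℝ be of class C³, fix x' ∈ ℝⁿ and b ∈ ℝⁿ, and let x : ℝ → ℝⁿ be a twice differentiable curve such that ∂Σ/∂x'ⁱ(x(τ),x') = τ·bᵢ for all τ ∈ ℝ and all i (a gradient line from the future). Suppose that for all τ the matrix with entries Σ_{ki'}(x(τ),x') = ∂²Σ/∂xᵏ∂x'ⁱ is invertible. Then the gradient line satisfies the geodesic equation d²xⁱ/dτ² + Σ_{k,l} Γⁱ_{kl}(x(τ),x') (dxᵏ/dτ)(dxˡ/dτ) = 0 for all τ and all i. -/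

import Mathlib

open Matrix

/-- Partial derivative `∂f/∂xⁱ` of a function `f : ℝⁿ → ℝ` at the point `x`. -/
noncomputable def pd (n : ℕ) (i : Fin n) (f : (Fin n → ℝ) → ℝ) (x : Fin n → ℝ) : ℝ :=
  fderiv ℝ f x (Pi.single i 1)

/-- The covariant fundamental metric tensor `Σ_{is'}(x,x') = ∂²Σ/∂xⁱ∂x'ˢ`. -/
noncomputable def Sig2 (n : ℕ) (W : (Fin n → ℝ) → (Fin n → ℝ) → ℝ)
    (x x' : Fin n → ℝ) : Matrix (Fin n) (Fin n) ℝ :=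
  Matrix.of fun i s => pd n i (fun z => pd n s (fun w => W z w) x') x

/-- The third derivative `Σ_{,kls'}(x,x') = ∂³Σ/∂xᵏ∂xˡ∂x'ˢ`. -/
noncomputable def Sig3 (n : ℕ) (W : (Fin n → ℝ) → (Fin n → ℝ) → ℝ)
    (x x' : Fin n → ℝ) (k l s : Fin n) : ℝ :=
  pd n k (fun z => pd n l (fun z2 => pd n s (fun w => W z2 w) x') z) x

/-- The Christoffel symbol `Γⁱ_{kl}(x,x') = Σ_s Σ^{is'} Σ_{,kls'}`, where `Σ^{is'}` is
the inverse of the fundamental metric tensor (`Σ_s Σ^{is'}Σ_{ls'} = δⁱₗ`). -/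
noncomputable def Gamma (n : ℕ) (W : (Fin n → ℝ) → (Fin n → ℝ) → ℝ)
    (x x' : Fin n → ℝ) (i k l : Fin n) : ℝ :=
  ∑ s : Fin n, ((Sig2 n W x x')ᵀ)⁻¹ i s * Sig3 n W x x' k l s

lemma clm_apply_eq_sum_single (n : ℕ) (L : (Fin n → ℝ) →L[ℝ] ℝ) (u : Fin n → ℝ) :
    L u = ∑ k, u k * L (Pi.single k 1) := by
  conv_lhs => rw [← Finset.univ_sum_single u]
  rw [map_sum]
  refine Finset.sum_congr rfl fun k _ => ?_
  have : Pi.single k (u k) = u k • (Pi.single k 1 : Fin n → ℝ) := by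
    rw [← Pi.single_smul, smul_eq_mul, mul_one]
  rw [this, L.map_smul, smul_eq_mul]

lemma triple_swap {m : ℕ} (f : Fin m → Fin m → Fin m → ℝ) :
    ∑ k, ∑ l, ∑ s, f k l s = ∑ s, ∑ k, ∑ l, f k l s := by
  have h1 : ∀ k, ∑ l, ∑ s, f k l s = ∑ s, ∑ l, f k l s := fun k => Finset.sum_comm
  simp_rw [h1]
  exact Finset.sum_comm

/-- A gradient line from the future, i.e. a twice differentiable curve `x(τ)` with
`∂Σ/∂x'ⁱ(x(τ),x') = τ·bᵢ`, satisfies the geodesic equation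
`d²xⁱ/dτ² + Γⁱ_{kl}(x(τ),x') (dxᵏ/dτ)(dxˡ/dτ) = 0`. -/
theorem gradient_line_satisfies_geodesic_equation
    (n : ℕ) (W : (Fin n → ℝ) → (Fin n → ℝ) → ℝ)
    (hreg : ContDiff ℝ 3 (fun p : (Fin n → ℝ) × (Fin n → ℝ) => W p.1 p.2))
    (x' b : Fin n → ℝ)
    (x v a : ℝ → (Fin n → ℝ))
    (hx : ∀ τ : ℝ, HasDerivAt x (v τ) τ)
    (hv : ∀ τ : ℝ, HasDerivAt v (a τ) τ)
    (hgrad : ∀ (τ : ℝ) (i : Fin n),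
      pd n i (fun w => W (x τ) w) x' = τ * b i)
    (hinv : ∀ τ : ℝ, IsUnit (Sig2 n W (x τ) x').det) :
    ∀ (τ : ℝ) (i : Fin n),
      a τ i + ∑ k : Fin n, ∑ l : Fin n,
        Gamma n W (x τ) x' i k l * v τ k * v τ l = 0 := by
  classical
  -- F s : gradient component as a function of the first point
  let F : Fin n → (Fin n → ℝ) → ℝ := fun s z => pd n s (fun w => W z w) x'
  have hG : ContDiff ℝ 2 (fun z => fderiv ℝ (fun w => W z w) x') :=
    ContDiff.fderiv (m := 3) (f := fun z w => W z w) (g := fun _ => x') hreg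
      contDiff_const (by norm_num)
  have hF : ∀ s, ContDiff ℝ 2 (F s) := fun s => hG.clm_apply contDiff_const
  -- P k s : first partial derivative of F s
  let P : Fin n → Fin n → (Fin n → ℝ) → ℝ := fun k s z => pd n k (F s) z
  have hDF : ∀ s, ContDiff ℝ 1 (fun z => fderiv ℝ (F s) z) := fun s =>
    (hF s).fderiv_right (by norm_num)
  have hP : ∀ k s, ContDiff ℝ 1 (P k s) := fun k s => (hDF s).clm_apply contDiff_const
  -- velocity components
  have hvk : ∀ (τ : ℝ) (k : Fin n), HasDerivAt (fun t => v t k) (a τ k) τ := by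
    intro τ k
    have := (ContinuousLinearMap.proj (R := ℝ) (φ := fun _ : Fin n => ℝ)
      k).hasFDerivAt.comp_hasDerivAt τ (hv τ)
    exact this
  -- Step A : Σ₂ᵀ *ᵥ v = b along the curve
  have keyA : ∀ (τ : ℝ) (s : Fin n), fderiv ℝ (F s) (x τ) (v τ) = b s := by
    intro τ s
    have h1 : HasDerivAt (fun t => F s (x t)) (fderiv ℝ (F s) (x τ) (v τ)) τ :=
      (((hF s).differentiable (by norm_num) (x τ)).hasFDerivAt).comp_hasDerivAt τ (hx τ)
    have h2 : (fun t => F s (x t)) = fun t => t * b s := funext fun t => hgrad t s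
    rw [h2] at h1
    have h3 : HasDerivAt (fun t : ℝ => t * b s) (b s) τ := by
      simpa using (hasDerivAt_id τ).mul_const (b s)
    exact h1.unique h3
  have stepA : ∀ (τ : ℝ) (s : Fin n), ∑ k, v τ k * P k s (x τ) = b s := by
    intro τ s
    rw [← keyA τ s, clm_apply_eq_sum_single]
    exact Finset.sum_congr rfl fun _ _ => rfl
  -- Step B : differentiate Step A
  have stepB : ∀ (τ : ℝ) (s : Fin n),
      ∑ k, (a τ k * P k s (x τ) + v τ k * fderiv ℝ (P k s) (x τ) (v τ)) = 0 := by
    intro τ s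
    have h1 : HasDerivAt (fun t => ∑ k, v t k * P k s (x t))
        (∑ k, (a τ k * P k s (x τ) + v τ k * fderiv ℝ (P k s) (x τ) (v τ))) τ := by
      refine HasDerivAt.fun_sum fun k _ => ?_
      exact (hvk τ k).mul
        ((((hP k s).differentiable (by norm_num) (x τ)).hasFDerivAt).comp_hasDerivAt τ (hx τ))
    have h2 : (fun t => ∑ k, v t k * P k s (x t)) = fun _ => b s :=
      funext fun t => stepA t s
    rw [h2] at h1
    exact h1.unique (hasDerivAt_const τ (b s))
  intro τ i
  -- notation
  set A := (Sig2 n W (x τ) x')ᵀ with hA_def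
  have hAdet : IsUnit A.det := by rw [hA_def, Matrix.det_transpose]; exact hinv τ
  have hSig2P : ∀ k s, Sig2 n W (x τ) x' k s = P k s (x τ) := fun _ _ => rfl
  have hSig3P : ∀ k l s, Sig3 n W (x τ) x' k l s = pd n k (P l s) (x τ) := fun _ _ _ => rfl
  -- expand second fderiv in Step B
  have stepB' : ∀ s : Fin n,
      (A *ᵥ a τ) s + ∑ k, ∑ l, Sig3 n W (x τ) x' k l s * v τ k * v τ l = 0 := by
    intro s
    have h1 := stepB τ s
    have h2 : ∀ k, fderiv ℝ (P k s) (x τ) (v τ)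
        = ∑ l, v τ l * Sig3 n W (x τ) x' l k s := by
      intro k
      rw [clm_apply_eq_sum_single]
      exact Finset.sum_congr rfl fun l _ => rfl
    rw [Finset.sum_add_distrib] at h1
    have e1 : (A *ᵥ a τ) s = ∑ k, a τ k * P k s (x τ) := by
      simp [Matrix.mulVec, dotProduct, hA_def, Matrix.transpose_apply, hSig2P, mul_comm]
    have e2 : ∑ k, ∑ l, Sig3 n W (x τ) x' k l s * v τ k * v τ l
        = ∑ k, v τ k * fderiv ℝ (P k s) (x τ) (v τ) := by
      rw [Finset.sum_comm]
      refine Finset.sum_congr rfl fun k _ => ?_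
      rw [h2 k, Finset.mul_sum]
      exact Finset.sum_congr rfl fun l _ => by ring
    rw [e1, e2]
    exact h1
  -- final algebra
  have hGam : ∑ k, ∑ l, Gamma n W (x τ) x' i k l * v τ k * v τ l
      = ∑ s, A⁻¹ i s * (∑ k, ∑ l, Sig3 n W (x τ) x' k l s * v τ k * v τ l) := by
    rw [hA_def]
    simp only [Gamma, Finset.sum_mul, Finset.mul_sum, mul_assoc]
    rw [triple_swap]
  have ha : a τ i = ∑ s, A⁻¹ i s * (A *ᵥ a τ) s := by
    have : A⁻¹ *ᵥ (A *ᵥ a τ) = a τ := by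
      rw [Matrix.mulVec_mulVec, Matrix.nonsing_inv_mul A hAdet, Matrix.one_mulVec]
    conv_lhs => rw [← this]
    simp [Matrix.mulVec, dotProduct]
  rw [hGam, ha, ← Finset.sum_add_distrib]
  refine Finset.sum_eq_zero fun s _ => ?_
  have h := stepB' s
  linear_combination A⁻¹ i s * h
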